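/- Let σ > 0 and let φ(z) = (1/√(2πσ²))·e^{−z²/(2σ²)} be the density of N(0,σ²). For ξ ∈ ℝ define p₀(ξ) = ∫_{−∞}^{ξ} φ(z) dz, Q(ξ) = 1 − p₀(ξ), the centroid ẑ(ξ) = ( ∫_{ξ}^{∞} z·φ(z) dz ) / Q(ξ), the entropy R(ξ) = −p₀(ξ)·log₂ p₀(ξ) − Q(ξ)·log₂ Q(ξ), and the distortion D(ξ) = ∫_{−∞}^{ξ} z²·φ(z) dz + ∫_{ξ}^{∞} (z − ẑ(ξ))²·φ(z) dz. Then lim_{ξ → ∞} R′(ξ)/D′(ξ) = −1/(2σ²·ln 2); i.e., the slope of the operational rate-distortion curve of the binary threshold quantizer coincides, at zero rate, with the slope −log₂(e)/(2σ²) of the Gaussian rate-distortion function. -/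

import Mathlib

/-- The density `φ(z) = (1/√(2πσ²))·e^{−z²/(2σ²)}` of `N(0,σ²)`. -/
noncomputable def gaussDensity (σ : ℝ) (z : ℝ) : ℝ :=
  (1 / Real.sqrt (2 * Real.pi * σ ^ 2)) * Real.exp (-z ^ 2 / (2 * σ ^ 2))

/-- The probability `p₀(ξ) = ∫_{−∞}^{ξ} φ(z) dz` of the lower quantizer cell. -/
noncomputable def cellProb (σ ξ : ℝ) : ℝ := ∫ z in Set.Iic ξ, gaussDensity σ z

/-- The centroid `ẑ(ξ) = (∫_{ξ}^{∞} z·φ(z) dz) / Q(ξ)` of the upper cell, `Q(ξ) = 1 − p₀(ξ)`. -/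
noncomputable def centroid (σ ξ : ℝ) : ℝ :=
  (∫ z in Set.Ioi ξ, z * gaussDensity σ z) / (1 - cellProb σ ξ)

/-- The entropy `R(ξ) = −p₀·log₂ p₀ − Q·log₂ Q` of the binary threshold quantizer. -/
noncomputable def quantEntropy (σ ξ : ℝ) : ℝ :=
  -cellProb σ ξ * Real.logb 2 (cellProb σ ξ) -
    (1 - cellProb σ ξ) * Real.logb 2 (1 - cellProb σ ξ)

/-- The distortion `D(ξ) = ∫_{−∞}^{ξ} z²·φ(z) dz + ∫_{ξ}^{∞} (z − ẑ(ξ))²·φ(z) dz` of the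
binary threshold quantizer. -/
noncomputable def quantDistortion (σ ξ : ℝ) : ℝ :=
  (∫ z in Set.Iic ξ, z ^ 2 * gaussDensity σ z) +
    ∫ z in Set.Ioi ξ, (z - centroid σ ξ) ^ 2 * gaussDensity σ z

/-!
Write `Q = 1 - p₀` for the tail probability. Since `z φ(z) = -σ² φ'(z)`, the upper cell has
first moment `σ² φ(ξ)`; expanding the square around the centroid turns the distortion into
`D(ξ) = E[Z²] - (σ² φ(ξ))² / Q(ξ)` and `D' = σ² φ² (2ξQ - σ²φ) / Q²`; the chain rule for the
binary entropy gives `R' = φ (log Q - log p₀) / ln 2`. By l'Hôpital, `r = ξ Q / (σ² φ) → 1`, hence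
`log Q = -ξ² / (2σ²) + o(ξ²)`, and `R'/D' = ((log Q - log p₀) / ξ²) · (r² / (2r - 1)) / ln 2`
tends to `-1 / (2σ² ln 2)`.
-/

open Real MeasureTheory Filter Topology Set

section GaussianDensity

variable {σ : ℝ}

lemma gaussDensity_eq_mul_exp (σ z : ℝ) :
    gaussDensity σ z = (√(2 * π * σ ^ 2))⁻¹ * exp (-(2 * σ ^ 2)⁻¹ * z ^ 2) := by
  rw [gaussDensity, one_div]
  ring_nf

lemma gaussDensity_pos (hσ : σ ≠ 0) (z : ℝ) : 0 < gaussDensity σ z := by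
  rw [gaussDensity_eq_mul_exp]
  have : 0 < √(2 * π * σ ^ 2) := sqrt_pos.2 (by positivity)
  positivity

lemma continuous_gaussDensity : Continuous (gaussDensity σ) := by
  unfold gaussDensity
  fun_prop

lemma hasDerivAt_gaussDensity (hσ : σ ≠ 0) (z : ℝ) :
    HasDerivAt (gaussDensity σ) (-(z / σ ^ 2) * gaussDensity σ z) z := by
  have h := (((hasDerivAt_pow 2 z).const_mul (-(2 * σ ^ 2)⁻¹)).exp).const_mul
    (√(2 * π * σ ^ 2))⁻¹
  simp only [← gaussDensity_eq_mul_exp] at h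
  refine h.congr_deriv ?_
  rw [gaussDensity_eq_mul_exp]
  field_simp
  ring

lemma integrable_pow_mul_gaussDensity (hσ : σ ≠ 0) (n : ℕ) :
    Integrable fun z => z ^ n * gaussDensity σ z := by
  have h := (integrable_rpow_mul_exp_neg_mul_sq (b := (2 * σ ^ 2)⁻¹) (by positivity)
    (s := n) (by linarith [n.cast_nonneg (α := ℝ)])).const_mul (√(2 * π * σ ^ 2))⁻¹
  refine h.congr (Eventually.of_forall fun z => ?_)
  simp only [rpow_natCast, gaussDensity_eq_mul_exp]
  ring

lemma integrable_gaussDensity (hσ : σ ≠ 0) : Integrable (gaussDensity σ) := by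
  simpa using integrable_pow_mul_gaussDensity hσ 0

lemma integrable_mul_gaussDensity (hσ : σ ≠ 0) : Integrable fun z => z * gaussDensity σ z := by
  simpa using integrable_pow_mul_gaussDensity hσ 1

lemma integral_gaussDensity (hσ : σ ≠ 0) : ∫ z, gaussDensity σ z = 1 := by
  simp_rw [gaussDensity_eq_mul_exp, integral_const_mul, integral_gaussian, div_inv_eq_mul]
  rw [show π * (2 * σ ^ 2) = 2 * π * σ ^ 2 by ring]
  exact inv_mul_cancel₀ (sqrt_pos.2 (by positivity)).ne'

lemma tendsto_gaussDensity_atTop (hσ : σ ≠ 0) : Tendsto (gaussDensity σ) atTop (𝓝 0) := by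
  have h : Tendsto (fun z : ℝ => -(2 * σ ^ 2)⁻¹ * z ^ 2) atTop atBot :=
    (tendsto_pow_atTop two_ne_zero).const_mul_atTop_of_neg (by simp; positivity)
  rw [show gaussDensity σ = _ from funext (gaussDensity_eq_mul_exp σ)]
  simpa using (tendsto_exp_atBot.comp h).const_mul (√(2 * π * σ ^ 2))⁻¹

end GaussianDensity

section CellProbabilities

variable {σ : ℝ}

lemma hasDerivAt_integral_Iic {f : ℝ → ℝ} (hf : Integrable f) (hf' : Continuous f) (x : ℝ) :
    HasDerivAt (fun y => ∫ z in Iic y, f z) (f x) x := by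
  have h (y : ℝ) : ∫ z in Iic y, f z = (∫ z in Iic 0, f z) + ∫ z in (0 : ℝ)..y, f z := by
    rw [← intervalIntegral.integral_Iic_sub_Iic hf.integrableOn hf.integrableOn]
    ring
  rw [funext h]
  exact (intervalIntegral.integral_hasDerivAt_right hf.intervalIntegrable
    (hf'.stronglyMeasurableAtFilter _ _) hf'.continuousAt).const_add _

lemma setIntegral_gaussDensity_pos (hσ : σ ≠ 0) {s : Set ℝ} (hs : volume s ≠ 0) :
    0 < ∫ z in s, gaussDensity σ z := by
  rw [setIntegral_pos_iff_support_of_nonneg_ae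
    (Eventually.of_forall fun z => (gaussDensity_pos hσ z).le)
    (integrable_gaussDensity hσ).integrableOn,
    Function.support_eq_univ fun z => (gaussDensity_pos hσ z).ne', univ_inter]
  exact pos_iff_ne_zero.2 hs

lemma integral_Ioi_gaussDensity (hσ : σ ≠ 0) (ξ : ℝ) :
    ∫ z in Ioi ξ, gaussDensity σ z = 1 - cellProb σ ξ := by
  rw [cellProb, ← integral_gaussDensity hσ, ← intervalIntegral.integral_Iic_add_Ioi
    (integrable_gaussDensity hσ).integrableOn (integrable_gaussDensity hσ).integrableOn]
  ring

lemma cellProb_pos (hσ : σ ≠ 0) (ξ : ℝ) : 0 < cellProb σ ξ :=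
  setIntegral_gaussDensity_pos hσ (by simp)

lemma one_sub_cellProb_pos (hσ : σ ≠ 0) (ξ : ℝ) : 0 < 1 - cellProb σ ξ :=
  integral_Ioi_gaussDensity hσ ξ ▸ setIntegral_gaussDensity_pos hσ (by simp)

lemma cellProb_lt_one (hσ : σ ≠ 0) (ξ : ℝ) : cellProb σ ξ < 1 :=
  sub_pos.1 (one_sub_cellProb_pos hσ ξ)

lemma hasDerivAt_cellProb (hσ : σ ≠ 0) (ξ : ℝ) :
    HasDerivAt (cellProb σ) (gaussDensity σ ξ) ξ :=
  hasDerivAt_integral_Iic (integrable_gaussDensity hσ) continuous_gaussDensity ξ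

lemma tendsto_cellProb_atTop (hσ : σ ≠ 0) : Tendsto (cellProb σ) atTop (𝓝 1) := by
  have h := tendsto_setIntegral_of_monotone (fun _ => measurableSet_Iic)
    (fun _ _ => Iic_subset_Iic.2) (integrable_gaussDensity hσ).integrableOn
  rwa [iUnion_Iic, setIntegral_univ, integral_gaussDensity hσ] at h

lemma integral_Ioi_mul_gaussDensity (hσ : σ ≠ 0) (ξ : ℝ) :
    ∫ z in Ioi ξ, z * gaussDensity σ z = σ ^ 2 * gaussDensity σ ξ := by
  have hderiv (x : ℝ) :
      HasDerivAt (fun z => -σ ^ 2 * gaussDensity σ z) (x * gaussDensity σ x) x := by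
    refine ((hasDerivAt_gaussDensity hσ x).const_mul (-σ ^ 2)).congr_deriv ?_
    field_simp
  rw [integral_Ioi_of_hasDerivAt_of_tendsto' (fun x _ => hderiv x)
    (integrable_mul_gaussDensity hσ).integrableOn
    (by simpa using (tendsto_gaussDensity_atTop hσ).const_mul (-σ ^ 2))]
  ring

end CellProbabilities

section Quantizer

variable {σ : ℝ}

lemma integral_sub_sq_mul {μ : Measure ℝ} {f : ℝ → ℝ} (h₀ : Integrable f μ)
    (h₁ : Integrable (fun z => z * f z) μ) (h₂ : Integrable (fun z => z ^ 2 * f z) μ) (c : ℝ) :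
    ∫ z, (z - c) ^ 2 * f z ∂μ =
      ∫ z, z ^ 2 * f z ∂μ - 2 * c * ∫ z, z * f z ∂μ + c ^ 2 * ∫ z, f z ∂μ := by
  have h : (fun z => (z - c) ^ 2 * f z) =
      fun z => z ^ 2 * f z - 2 * c * (z * f z) + c ^ 2 * f z := by
    funext z
    ring
  rw [h, integral_add _ (h₀.const_mul _), integral_sub h₂ (h₁.const_mul _), integral_const_mul,
    integral_const_mul]
  exact h₂.sub (h₁.const_mul _)

lemma quantDistortion_eq (hσ : σ ≠ 0) (ξ : ℝ) :
    quantDistortion σ ξ =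
      (∫ z, z ^ 2 * gaussDensity σ z) - (σ ^ 2 * gaussDensity σ ξ) ^ 2 / (1 - cellProb σ ξ) := by
  have hQ : 1 - cellProb σ ξ ≠ 0 := (one_sub_cellProb_pos hσ ξ).ne'
  have h₂ := integrable_pow_mul_gaussDensity hσ 2
  rw [quantDistortion, integral_sub_sq_mul (integrable_gaussDensity hσ).integrableOn
    (integrable_mul_gaussDensity hσ).integrableOn h₂.integrableOn, centroid,
    integral_Ioi_mul_gaussDensity hσ, integral_Ioi_gaussDensity hσ,
    ← intervalIntegral.integral_Iic_add_Ioi h₂.integrableOn h₂.integrableOn (b := ξ)]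
  field_simp
  ring

lemma hasDerivAt_quantDistortion (hσ : σ ≠ 0) (ξ : ℝ) :
    HasDerivAt (quantDistortion σ)
      (σ ^ 2 * gaussDensity σ ξ ^ 2 * (2 * ξ * (1 - cellProb σ ξ) - σ ^ 2 * gaussDensity σ ξ) /
        (1 - cellProb σ ξ) ^ 2) ξ := by
  have hQ : 1 - cellProb σ ξ ≠ 0 := (one_sub_cellProb_pos hσ ξ).ne'
  have hM : HasDerivAt (fun y => (σ ^ 2 * gaussDensity σ y) ^ 2) _ ξ :=
    ((hasDerivAt_gaussDensity hσ ξ).const_mul (σ ^ 2)).pow 2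
  have hP := (hasDerivAt_cellProb hσ ξ).const_sub 1
  rw [funext (quantDistortion_eq hσ)]
  refine ((hasDerivAt_const ξ (∫ z, z ^ 2 * gaussDensity σ z)).sub
    (hM.div hP hQ)).congr_deriv ?_
  field_simp
  ring

lemma quantEntropy_eq_binEntropy (σ ξ : ℝ) :
    quantEntropy σ ξ = binEntropy (cellProb σ ξ) / log 2 := by
  rw [quantEntropy, binEntropy, logb, logb, log_inv, log_inv]
  ring

lemma hasDerivAt_quantEntropy (hσ : σ ≠ 0) (ξ : ℝ) :
    HasDerivAt (quantEntropy σ)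
      ((log (1 - cellProb σ ξ) - log (cellProb σ ξ)) * gaussDensity σ ξ / log 2) ξ := by
  rw [funext (quantEntropy_eq_binEntropy σ)]
  exact ((hasDerivAt_binEntropy (cellProb_pos hσ ξ).ne' (cellProb_lt_one hσ ξ).ne).comp ξ
    (hasDerivAt_cellProb hσ ξ)).div_const _

end Quantizer

section Asymptotics

variable {σ : ℝ}

noncomputable def normalizedMillsRatio (σ ξ : ℝ) : ℝ :=
  ξ * (1 - cellProb σ ξ) / (σ ^ 2 * gaussDensity σ ξ)

lemma tendsto_normalizedMillsRatio_atTop (hσ : σ ≠ 0) :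
    Tendsto (normalizedMillsRatio σ) atTop (𝓝 1) := by
  have hderiv : ∀ᶠ x in atTop, HasDerivAt (fun ξ => σ ^ 2 * gaussDensity σ ξ / ξ)
      (-((x ^ 2 + σ ^ 2) * gaussDensity σ x / x ^ 2)) x := by
    filter_upwards [eventually_ne_atTop 0] with x hx
    refine (((hasDerivAt_gaussDensity hσ x).const_mul (σ ^ 2)).div (hasDerivAt_id' x)
      hx).congr_deriv ?_
    field_simp
    ring
  have hratio : Tendsto (fun x : ℝ => (1 + σ ^ 2 * (x ^ 2)⁻¹)⁻¹) atTop (𝓝 1) := by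
    simpa using ((tendsto_inv_atTop_zero.comp (tendsto_pow_atTop two_ne_zero)).const_mul
      (σ ^ 2)).const_add 1 |>.inv₀ (by simp)
  have h := HasDerivAt.lhopital_zero_atTop
    (Eventually.of_forall fun x => (hasDerivAt_cellProb hσ x).const_sub 1) hderiv
    (by
      filter_upwards [eventually_ne_atTop 0] with x hx
      have := gaussDensity_pos hσ x
      exact neg_ne_zero.2 (by positivity))
    (by simpa using (tendsto_cellProb_atTop hσ).const_sub 1)
    (by simpa using ((tendsto_gaussDensity_atTop hσ).const_mul (σ ^ 2)).div_atTop tendsto_id)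
    (hratio.congr' (by
      filter_upwards [eventually_ne_atTop 0] with x hx
      have := (gaussDensity_pos hσ x).ne'
      field_simp))
  refine h.congr fun ξ => ?_
  rw [normalizedMillsRatio, div_div_eq_mul_div, mul_comm]

lemma log_gaussDensity (hσ : σ ≠ 0) (ξ : ℝ) :
    log (gaussDensity σ ξ) = log (√(2 * π * σ ^ 2))⁻¹ - (2 * σ ^ 2)⁻¹ * ξ ^ 2 := by
  have : (√(2 * π * σ ^ 2))⁻¹ ≠ 0 := inv_ne_zero (sqrt_pos.2 (by positivity)).ne'
  rw [gaussDensity_eq_mul_exp, log_mul this (exp_ne_zero _), log_exp]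
  ring

lemma tendsto_log_one_sub_cellProb_div_sq (hσ : σ ≠ 0) :
    Tendsto (fun ξ => log (1 - cellProb σ ξ) / ξ ^ 2) atTop (𝓝 (-(2 * σ ^ 2)⁻¹)) := by
  have hlogr : Tendsto (fun ξ => log (normalizedMillsRatio σ ξ)) atTop (𝓝 0) := by
    simpa using (tendsto_normalizedMillsRatio_atTop hσ).log one_ne_zero
  have hlog : Tendsto (fun ξ => log ξ / ξ) atTop (𝓝 0) :=
    isLittleO_log_id_atTop.tendsto_div_nhds_zero
  have h := ((((hlogr.add_const (log (σ ^ 2) + log (√(2 * π * σ ^ 2))⁻¹)).div_atTop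
    tendsto_id).sub hlog).div_atTop tendsto_id).sub_const (2 * σ ^ 2)⁻¹
  rw [zero_sub] at h
  refine h.congr' ?_
  filter_upwards [eventually_gt_atTop 0] with ξ hξ
  simp only [id]
  have hφ := (gaussDensity_pos hσ ξ).ne'
  have hQ : 1 - cellProb σ ξ ≠ 0 := (one_sub_cellProb_pos hσ ξ).ne'
  have hr : normalizedMillsRatio σ ξ ≠ 0 :=
    div_ne_zero (mul_ne_zero hξ.ne' hQ) (mul_ne_zero (pow_ne_zero 2 hσ) hφ)
  have hsplit : 1 - cellProb σ ξ = normalizedMillsRatio σ ξ * (σ ^ 2 * gaussDensity σ ξ) / ξ := by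
    rw [normalizedMillsRatio]
    field_simp
  rw [hsplit, log_div (by positivity) hξ.ne', log_mul hr (by positivity),
    log_mul (by positivity) hφ, log_gaussDensity hσ ξ]
  field_simp
  ring

end Asymptotics

lemma deriv_quantEntropy_div_deriv_quantDistortion {σ ξ : ℝ} (hσ : σ ≠ 0) (hξ : ξ ≠ 0) :
    deriv (quantEntropy σ) ξ / deriv (quantDistortion σ) ξ =
      (log (1 - cellProb σ ξ) - log (cellProb σ ξ)) / ξ ^ 2 *
        (normalizedMillsRatio σ ξ ^ 2 / (2 * normalizedMillsRatio σ ξ - 1)) / log 2 := by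
  have hφ := (gaussDensity_pos hσ ξ).ne'
  have hQ : 1 - cellProb σ ξ ≠ 0 := (one_sub_cellProb_pos hσ ξ).ne'
  rw [(hasDerivAt_quantEntropy hσ ξ).deriv, (hasDerivAt_quantDistortion hσ ξ).deriv,
    normalizedMillsRatio]
  field_simp

/-- STATEMENT 18: `lim_{ξ → ∞} R′(ξ)/D′(ξ) = −1/(2σ²·ln 2)`: the slope of the operational
rate-distortion curve of the binary threshold quantizer coincides, at zero rate, with the slope
`−log₂(e)/(2σ²)` of the Gaussian rate-distortion function. -/
theorem threshold_quantizer_slope (σ : ℝ) (hσ : 0 < σ) :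
    Filter.Tendsto (fun ξ : ℝ => deriv (quantEntropy σ) ξ / deriv (quantDistortion σ) ξ)
      Filter.atTop (nhds (-1 / (2 * σ ^ 2 * Real.log 2))) := by
  have hσ₀ := hσ.ne'
  have hr := tendsto_normalizedMillsRatio_atTop hσ₀
  have hden : Tendsto (fun ξ => 2 * normalizedMillsRatio σ ξ - 1) atTop (𝓝 1) := by
    convert (hr.const_mul 2).sub_const 1
    norm_num
  have hlogP : Tendsto (fun ξ => log (cellProb σ ξ) / ξ ^ 2) atTop (𝓝 0) := by
    simpa using ((tendsto_cellProb_atTop hσ₀).log one_ne_zero).div_atTop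
      (tendsto_pow_atTop two_ne_zero)
  have h := (((tendsto_log_one_sub_cellProb_div_sq hσ₀).sub hlogP).mul
    ((hr.pow 2).div hden one_ne_zero)).div_const (log 2)
  rw [show (-(2 * σ ^ 2)⁻¹ - 0) * (1 ^ 2 / 1) / log 2 = -1 / (2 * σ ^ 2 * log 2) by
    rw [sub_zero, one_pow, div_one, mul_one]
    field_simp] at h
  refine h.congr' ?_
  filter_upwards [eventually_ne_atTop 0] with ξ hξ
  rw [deriv_quantEntropy_div_deriv_quantDistortion hσ₀ hξ, sub_div]
  rfl
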